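/- arXiv:2408.02096 — 3 statements merged into one kernel-verified Lean document; each statement's English description precedes it below -/
import Mathlib

section
/- Let $m \ge 2$, $z > 0$ real, and $z_j \in \mathbb{C}$ with $\pi - \pi/m < |\operatorname{Arg} z_j| \le \pi$. Let $\omega_k = e^{(2k-1)\pi i/m}$. Then for every $k$ with $2 \le k < m$, $|\omega_k z - z_j| < |\omega_0 z - \overline{z_j}|$. -/
/-!
Both sides are distances from `z_j` to points of the circle `|w| = z`: conjugating the right-hand
side turns it into `|z e^{iπ/m} - z_j|`. By the law of cosines it therefore suffices to see that
`e^{i(2k-1)π/m}` is angularly closer to `Arg z_j` than `e^{iπ/m}` is. This holds because `Arg z_j`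
lies within `π/m` of `π` (modulo `2π`), while `(2k-1)π/m ∈ [3π/m, 2π - 3π/m]`.
-/

/-- The `m`-th roots of `-1`: `ω_k = e^{(2k-1)πi/m}`. -/
noncomputable def omegaRoot (m k : ℕ) : ℂ :=
  Complex.exp ((2 * (k : ℂ) - 1) * Real.pi * Complex.I / m)

open Complex

lemma omegaRoot_eq_exp (m k : ℕ) :
    omegaRoot m k = exp (((2 * k - 1) * Real.pi / m : ℝ) * I) := by
  rw [omegaRoot]
  push_cast
  ring_nf

lemma norm_ofReal_mul_exp_sub_sq (z φ : ℝ) (w : ℂ) :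
    ‖(z : ℂ) * exp (φ * I) - w‖ ^ 2 = z ^ 2 + ‖w‖ ^ 2 - 2 * z * ‖w‖ * Real.cos (φ - w.arg) := by
  conv_lhs => rw [← norm_mul_exp_arg_mul_I w]
  rw [Complex.sq_norm, normSq_apply]
  simp only [sub_re, sub_im, mul_re, mul_im, ofReal_re, ofReal_im, exp_ofReal_mul_I_re,
    exp_ofReal_mul_I_im, zero_mul, sub_zero, add_zero, Real.cos_sub]
  nlinarith [Real.sin_sq_add_cos_sq φ, Real.sin_sq_add_cos_sq w.arg]

lemma norm_ofReal_mul_exp_sub_lt {z φ ψ : ℝ} {w : ℂ} (hz : 0 < z) (hw : w ≠ 0)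
    (h : Real.cos (ψ - w.arg) < Real.cos (φ - w.arg)) :
    ‖(z : ℂ) * exp (φ * I) - w‖ < ‖(z : ℂ) * exp (ψ * I) - w‖ := by
  apply lt_of_pow_lt_pow_left₀ 2 (norm_nonneg _)
  rw [norm_ofReal_mul_exp_sub_sq, norm_ofReal_mul_exp_sub_sq]
  nlinarith [mul_pos hz (norm_pos_iff.mpr hw)]

lemma cos_sub_lt_cos_sub_of_abs_sub_pi_lt {α β θ : ℝ} (hθ : |θ - Real.pi| < α)
    (hβ : 3 * α ≤ β) (hβ' : β ≤ 2 * Real.pi - 3 * α) :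
    Real.cos (α - θ) < Real.cos (β - θ) := by
  obtain ⟨hθ₁, hθ₂⟩ := abs_lt.mp hθ
  calc Real.cos (α - θ) = Real.cos (θ - α) := by rw [← Real.cos_neg, neg_sub]
    _ < Real.cos (Real.pi - 2 * α) :=
      Real.cos_lt_cos_of_nonneg_of_le_pi (by linarith) (by linarith) (by linarith)
    _ ≤ Real.cos |β - θ| :=
      Real.cos_le_cos_of_nonneg_of_le_pi (abs_nonneg _) (by linarith)
        (abs_le.mpr ⟨by linarith, by linarith⟩)
    _ = Real.cos (β - θ) := Real.cos_abs _

lemma cos_sub_lt_cos_sub_of_pi_sub_lt_abs {α β θ : ℝ} (hθ : Real.pi - α < |θ|)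
    (hθ' : |θ| ≤ Real.pi) (hβ : 3 * α ≤ β) (hβ' : β ≤ 2 * Real.pi - 3 * α) :
    Real.cos (α - θ) < Real.cos (β - θ) := by
  rcases abs_cases θ with ⟨habs, hθ₀⟩ | ⟨habs, hθ₀⟩
  · rw [habs] at hθ hθ'
    exact cos_sub_lt_cos_sub_of_abs_sub_pi_lt (abs_lt.mpr ⟨by linarith, by linarith⟩) hβ hβ'
  · rw [habs] at hθ hθ'
    have h := cos_sub_lt_cos_sub_of_abs_sub_pi_lt (θ := θ + 2 * Real.pi)
      (abs_lt.mpr ⟨by linarith, by linarith⟩) hβ hβ'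
    rwa [sub_add_eq_sub_sub, sub_add_eq_sub_sub, Real.cos_sub_two_pi, Real.cos_sub_two_pi] at h

theorem stmt_3_general (m : ℕ) (z : ℝ) (hz : 0 < z) (zj : ℂ)
    (harg : Real.pi - Real.pi / m < |zj.arg| ∧ |zj.arg| ≤ Real.pi)
    (k : ℕ) (hk2 : 2 ≤ k) (hkm : k < m) :
    ‖omegaRoot m k * z - zj‖ <
      ‖omegaRoot m 0 * z - (starRingEnd ℂ) zj‖ := by
  have hm : (3 : ℝ) ≤ m := by exact_mod_cast hk2.trans_lt hkm
  have hπm : Real.pi / m < Real.pi := div_lt_self Real.pi_pos (by linarith)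
  have hzj : zj ≠ 0 := by
    rintro rfl
    simp only [arg_zero, abs_zero] at harg
    linarith [harg.1]
  have hconj : ‖omegaRoot m 0 * z - (starRingEnd ℂ) zj‖ =
      ‖(z : ℂ) * exp ((Real.pi / m : ℝ) * I) - zj‖ := by
    rw [← norm_conj, map_sub, Complex.conj_conj, map_mul, conj_ofReal, omegaRoot_eq_exp,
      ← exp_conj, map_mul, conj_ofReal, conj_I, mul_comm]
    congr 4
    push_cast
    ring
  rw [hconj, omegaRoot_eq_exp, mul_comm]
  have hα : 0 < Real.pi / m := div_pos Real.pi_pos (by linarith)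
  refine norm_ofReal_mul_exp_sub_lt hz hzj (cos_sub_lt_cos_sub_of_pi_sub_lt_abs harg.1 harg.2 ?_ ?_)
  · have hk : (2 : ℝ) ≤ k := by exact_mod_cast hk2
    rw [mul_div_assoc]
    nlinarith
  · have hk : (k : ℝ) + 1 ≤ m := by exact_mod_cast hkm
    have hmα : (m : ℝ) * (Real.pi / m) = Real.pi := mul_div_cancel₀ _ (by positivity)
    rw [mul_div_assoc]
    nlinarith

/-- If `m ≥ 2`, `z > 0` and `π - π/m < |Arg z_j| ≤ π`, then for `2 ≤ k < m` one has
`|ω_k z - z_j| < |ω_0 z - conj z_j|`. -/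
theorem stmt_3 (m : ℕ) (hm : 2 ≤ m) (z : ℝ) (hz : 0 < z) (zj : ℂ)
    (harg : Real.pi - Real.pi / m < |zj.arg| ∧ |zj.arg| ≤ Real.pi)
    (k : ℕ) (hk2 : 2 ≤ k) (hkm : k < m) :
    ‖omegaRoot m k * z - zj‖ <
      ‖omegaRoot m 0 * z - (starRingEnd ℂ) zj‖ :=
  stmt_3_general m z hz zj harg k hk2 hkm
end

section
/- Let $m \ge 2$, $z > 0$ real, and $z_j$ a complex number with $\operatorname{Re} z_j < 0$. Define $f(\theta) = |ze^{i\theta} - z_j|^2 |ze^{i\theta} - \overline{z_j}|^2$ for $\theta \in [\pi/m, \pi - \pi/m]$. Then $f$ attains its maximum on this interval only at $\theta = \pi/m$; that is, $f(\theta) < f(\pi/m)$ for all $\theta \in (\pi/m, \pi - \pi/m]$. -/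
lemma absq (z : ℝ) (θ : ℝ) (w : ℂ) :
    ‖(z : ℂ) * Complex.exp ((θ : ℝ) * Complex.I) - w‖ ^ 2 =
      (z * Real.cos θ - w.re) ^ 2 + (z * Real.sin θ - w.im) ^ 2 := by
  rw [← Complex.normSq_eq_norm_sq, Complex.normSq_apply]
  simp [Complex.exp_mul_I, Complex.add_re, Complex.add_im, Complex.mul_re, Complex.mul_im, Complex.cos_ofReal_re, Complex.sin_ofReal_re]
  ring

/-- For `m ≥ 2`, `z > 0`, `Re z_j < 0`, the function
`f(θ) = |z e^{iθ} - z_j|² |z e^{iθ} - conj z_j|²` on `[π/m, π - π/m]` attains its maximum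
only at `θ = π/m`: i.e. `f(θ) < f(π/m)` for all `θ ∈ (π/m, π - π/m]`. -/
theorem stmt_6 (m : ℕ) (hm : 2 ≤ m) (z : ℝ) (hz : 0 < z) (zj : ℂ) (hre : zj.re < 0)
    (θ : ℝ) (hθ : θ ∈ Set.Ioc (Real.pi / m) (Real.pi - Real.pi / m)) :
    ‖(z : ℂ) * Complex.exp (θ * Complex.I) - zj‖ ^ 2 *
        ‖(z : ℂ) * Complex.exp (θ * Complex.I) - (starRingEnd ℂ) zj‖ ^ 2 <
      ‖(z : ℂ) * Complex.exp ((Real.pi / m : ℝ) * Complex.I) - zj‖ ^ 2 *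
        ‖(z : ℂ) * Complex.exp ((Real.pi / m : ℝ) * Complex.I) - (starRingEnd ℂ) zj‖ ^ 2 := by
  obtain ⟨hθ1, hθ2⟩ := hθ
  have hm' : (2:ℝ) ≤ m := by exact_mod_cast hm
  have hπ := Real.pi_pos
  have hpos : 0 < Real.pi / m := by positivity
  have hle2 : Real.pi / m ≤ Real.pi / 2 := by
    gcongr
  have hc0 : 0 ≤ Real.cos (Real.pi / m) :=
    Real.cos_nonneg_of_mem_Icc ⟨by linarith, hle2⟩
  have hcc : Real.cos θ < Real.cos (Real.pi / m) := by
    apply Real.cos_lt_cos_of_nonneg_of_le_pi hpos.le (by linarith) hθ1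
  have hcg : -Real.cos (Real.pi / m) ≤ Real.cos θ := by
    have h := Real.cos_le_cos_of_nonneg_of_le_pi (by linarith : (0:ℝ) ≤ θ)
      (by linarith : Real.pi - Real.pi / m ≤ Real.pi) hθ2
    rwa [Real.cos_pi_sub] at h
  rw [absq, absq, absq, absq]
  have hsq : Real.sin θ ^ 2 = 1 - Real.cos θ ^ 2 := by
    have := Real.sin_sq_add_cos_sq θ; linarith
  have hsq0 : Real.sin (Real.pi / m) ^ 2 = 1 - Real.cos (Real.pi / m) ^ 2 := by
    have := Real.sin_sq_add_cos_sq (Real.pi / m); linarith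
  simp only [Complex.conj_re, Complex.conj_im]
  set a := zj.re
  set b := zj.im
  set c := Real.cos θ
  set s := Real.sin θ
  set c0 := Real.cos (Real.pi / m)
  set s0 := Real.sin (Real.pi / m)
  have hA : 0 < z^2 + a^2 + b^2 := by positivity
  have e1 : ((z*c - a)^2 + (z*s - b)^2) * ((z*c - a)^2 + (z*s - -b)^2)
      = (z^2 + a^2 + b^2 - 2*z*a*c)^2 - 4*z^2*b^2 + 4*z^2*b^2*c^2 := by
    linear_combination (z^2*((z*c-a)^2 + z^2*s^2 + b^2) + z^2*((z*c-a)^2 + z^2*(1-c^2) + b^2)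
      - 4*z^2*b^2) * hsq
  have e2 : ((z*c0 - a)^2 + (z*s0 - b)^2) * ((z*c0 - a)^2 + (z*s0 - -b)^2)
      = (z^2 + a^2 + b^2 - 2*z*a*c0)^2 - 4*z^2*b^2 + 4*z^2*b^2*c0^2 := by
    linear_combination (z^2*((z*c0-a)^2 + z^2*s0^2 + b^2) + z^2*((z*c0-a)^2 + z^2*(1-c0^2) + b^2)
      - 4*z^2*b^2) * hsq0
  rw [e1, e2]
  have t1 : 0 < (-a) * (c0 - c) := mul_pos (neg_pos.2 hre) (sub_pos.2 hcc)
  have t2 : 0 ≤ (c0 - c) * (c0 + c) := mul_nonneg (by linarith) (by linarith)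
  nlinarith [mul_pos hz (mul_pos hA t1),
    mul_nonneg (mul_nonneg (mul_nonneg hz.le hz.le) (by positivity : (0:ℝ) ≤ a^2 + b^2)) t2]
end

section
/- Let $m \ge 2$ be even, $z > 0$ real, and $z_j \in \mathbb{C}$ with $\operatorname{Re} z_j < 0$. Let $\omega_k = e^{(2k-1)\pi i/m}$, so that $\omega_0 = e^{-\pi i/m}$. Then for every $k$ with $2 \le k < m$, $|\omega_k z - z_j|\,|\omega_k z - \overline{z_j}| < |\omega_0 z - z_j|\,|\omega_0 z - \overline{z_j}|$. -/
open Real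

lemma prod_eq' (z x y c s : ℝ) (hs : s^2 = 1 - c^2) :
    ((z*c - x)^2 + (z*s - y)^2) * ((z*c - x)^2 + (z*s + y)^2)
      = ((z^2+x^2+y^2) - 2*z*x*c)^2 - 4*z^2*y^2*(1-c^2) := by
  linear_combination (z^4*(s^2+1-c^2) - 2*z^2*y^2 + 2*z^2*(z*c-x)^2) * hs

lemma key_ineq' (z x y c c₁ s s₁ : ℝ) (hz : 0 < z) (hx : x < 0)
    (hs : s^2 = 1 - c^2) (hs₁ : s₁^2 = 1 - c₁^2) (hc : c < c₁) (hcc : 0 ≤ c + c₁) :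
    ((z*c - x)^2 + (z*s - y)^2) * ((z*c - x)^2 + (z*s + y)^2)
      < ((z*c₁ - x)^2 + (z*s₁ - y)^2) * ((z*c₁ - x)^2 + (z*s₁ + y)^2) := by
  rw [prod_eq' z x y c s hs, prod_eq' z x y c₁ s₁ hs₁]
  have hA : 0 < z^2 + x^2 + y^2 := by positivity
  have h1 : 0 < -(z^2+x^2+y^2)*x := by nlinarith
  have h2 : 0 ≤ z*(x^2+y^2)*(c+c₁) := by positivity
  have h3 : 0 < 4*z*(c₁-c) * (-(z^2+x^2+y^2)*x + z*(x^2+y^2)*(c+c₁)) := by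
    apply mul_pos (by nlinarith) (by linarith)
  nlinarith [h3]

lemma cos_bound' (m n : ℕ) (hm : 2 ≤ m) (h3 : 3 ≤ n) (hn : n ≤ m - 1) :
    Real.cos (n*π/m) < Real.cos (π/m) ∧ -Real.cos (π/m) ≤ Real.cos (n*π/m) := by
  have hm0 : (0:ℝ) < m := by exact_mod_cast Nat.lt_of_lt_of_le (by norm_num) hm
  have hn' : (n:ℝ) ≤ (m:ℝ) - 1 := by
    have : n + 1 ≤ m := by omega
    have := (Nat.cast_le (α := ℝ)).2 this
    push_cast at this; linarith
  have h3' : (3:ℝ) ≤ (n:ℝ) := by exact_mod_cast h3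
  have hpi := Real.pi_pos
  have hmem1 : π/m ∈ Set.Icc 0 π := by
    constructor
    · positivity
    · rw [div_le_iff₀ hm0]; nlinarith
  have hmem2 : (n:ℝ)*π/m ∈ Set.Icc 0 π := by
    constructor
    · positivity
    · rw [div_le_iff₀ hm0]; nlinarith
  constructor
  · apply Real.strictAntiOn_cos hmem1 hmem2
    rw [div_lt_div_iff₀ hm0 hm0]
    nlinarith [mul_pos hpi hm0]
  · have := Real.cos_pi_sub (π/m)
    rw [← this]
    apply Real.strictAntiOn_cos.antitoneOn hmem2 ?_ ?_
    · constructor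
      · nlinarith [hmem1.2]
      · linarith [hmem1.1]
    · rw [div_le_iff₀ hm0, sub_mul, div_mul_cancel₀ _ (ne_of_gt hm0)]
      nlinarith [mul_le_mul_of_nonneg_right hn' hpi.le]

lemma omega_eq' (m k : ℕ) :
    omegaRoot m k = Complex.exp ((((2*(k:ℝ)-1)*π/m : ℝ) : ℂ) * Complex.I) := by
  unfold omegaRoot
  congr 1
  push_cast
  ring

lemma normSq_form' (θ z : ℝ) (w : ℂ) :
    Complex.normSq (Complex.exp ((θ:ℂ)*Complex.I) * z - w)
      = (z*Real.cos θ - w.re)^2 + (z*Real.sin θ - w.im)^2 := by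
  rw [Complex.normSq_apply]
  simp [Complex.sub_re, Complex.sub_im, Complex.mul_re, Complex.mul_im,
    Complex.exp_ofReal_mul_I_re, Complex.exp_ofReal_mul_I_im]
  ring

lemma omega_zero' (m : ℕ) : omegaRoot m 0 = (starRingEnd ℂ) (omegaRoot m 1) := by
  unfold omegaRoot
  rw [← Complex.exp_conj]
  congr 1
  simp [map_div₀, map_mul, map_sub, Complex.conj_I, map_ofNat]
  ring

/-- For even `m ≥ 2`, `z > 0` and `Re z_j < 0`, for every `2 ≤ k < m`:
`|ω_k z - z_j||ω_k z - conj z_j| < |ω_1 z - z_j||ω_1 z - conj z_j|`, and equivalently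
the same with `ω_0` on the right-hand side. -/
theorem stmt_7 (m : ℕ) (hm : 2 ≤ m) (hme : Even m) (z : ℝ) (hz : 0 < z) (zj : ℂ)
    (hre : zj.re < 0) (k : ℕ) (hk2 : 2 ≤ k) (hkm : k < m) :
    (‖omegaRoot m k * z - zj‖ * ‖omegaRoot m k * z - (starRingEnd ℂ) zj‖ <
      ‖omegaRoot m 1 * z - zj‖ * ‖omegaRoot m 1 * z - (starRingEnd ℂ) zj‖) ∧
    (‖omegaRoot m k * z - zj‖ * ‖omegaRoot m k * z - (starRingEnd ℂ) zj‖ <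
      ‖omegaRoot m 0 * z - zj‖ * ‖omegaRoot m 0 * z - (starRingEnd ℂ) zj‖) := by
  have hm0 : (0:ℝ) < m := by exact_mod_cast Nat.lt_of_lt_of_le (by norm_num) hm
  have hpi := Real.pi_pos
  -- the angle for k, as n*π/m with n = 2k-1
  set n : ℕ := 2*k - 1 with hn
  have hncast : (2*(k:ℝ)-1) = (n:ℝ) := by
    have : (1:ℕ) ≤ 2*k := by omega
    push_cast [hn, Nat.cast_sub this]
    ring
  have hnodd : n ≠ m := by
    obtain ⟨t, ht⟩ := hme
    omega
  -- cosine bounds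
  have hcos : Real.cos ((n:ℝ)*π/m) < Real.cos (π/m) ∧
      -Real.cos (π/m) ≤ Real.cos ((n:ℝ)*π/m) := by
    rcases lt_or_gt_of_ne hnodd with hlt | hgt
    · exact cos_bound' m n hm (by omega) (by omega)
    · have h2m : n ≤ 2*m := by omega
      have hne : ((2*m - n : ℕ):ℝ) = 2*(m:ℝ) - (n:ℝ) := by
        push_cast [Nat.cast_sub h2m]; ring
      have harg : (n:ℝ)*π/m = 2*π - ((2*m-n:ℕ):ℝ)*π/m := by
        rw [hne]; field_simp; ring
      rw [harg, Real.cos_two_pi_sub]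
      exact cos_bound' m (2*m-n) hm (by omega) (by omega)
  -- main inequality (part 1)
  have hθ1 : (2*((1:ℕ):ℝ)-1)*π/(m:ℝ) = π/m := by norm_num
  have main : ‖omegaRoot m k * z - zj‖ * ‖omegaRoot m k * z - (starRingEnd ℂ) zj‖ <
      ‖omegaRoot m 1 * z - zj‖ * ‖omegaRoot m 1 * z - (starRingEnd ℂ) zj‖ := by
    refine lt_of_pow_lt_pow_left₀ 2 (by positivity) ?_
    rw [mul_pow, mul_pow, Complex.sq_norm, Complex.sq_norm, Complex.sq_norm, Complex.sq_norm,
      omega_eq' m k, omega_eq' m 1, normSq_form', normSq_form', normSq_form', normSq_form',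
      hθ1, hncast]
    simp only [Complex.conj_re, Complex.conj_im, sub_neg_eq_add]
    exact key_ineq' z zj.re zj.im _ _ _ _ hz hre (Real.sin_sq _) (Real.sin_sq _)
      hcos.1 (by linarith [hcos.2])
  refine ⟨main, ?_⟩
  have h0 := omega_zero' m
  have e1 : omegaRoot m 0 * z - zj = (starRingEnd ℂ) (omegaRoot m 1 * z - (starRingEnd ℂ) zj) := by
    rw [map_sub, map_mul, Complex.conj_conj, Complex.conj_ofReal, h0]
  have e2 : omegaRoot m 0 * z - (starRingEnd ℂ) zj = (starRingEnd ℂ) (omegaRoot m 1 * z - zj) := by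
    rw [map_sub, map_mul, Complex.conj_ofReal, h0]
  rw [e1, e2, Complex.norm_conj, Complex.norm_conj,
    mul_comm ‖omegaRoot m 1 * (z:ℂ) - (starRingEnd ℂ) zj‖]
  exact main
end
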